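/- Fix integers n > 1 and d ≥ n, and define G : ℝ^d → {±1} by G(x) = sgn((n − 1) + Σ_{i=1}^n sgn(x_i)), where x_i is the i-th coordinate of x (so G(x) = 1 iff some x_i ≥ 0). Then G cannot be computed by any two-layer rectifier network with fewer than n hidden units: there do NOT exist m < n, weight vectors u_k ∈ ℝ^d, biases b_k ∈ ℝ, output weights w_k ∈ ℝ (k = 1,…,m) and an output bias w_0 such that G(x) = sgn(w_0 + Σ_{k=1}^m w_k max(0, u_k · x + b_k)) for all x ∈ ℝ^d. -/
import Mathlib


/-- `sgn x = 1` if `x ≥ 0`, and `-1` otherwise. -/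
noncomputable def sgn (x : ℝ) : ℝ := if 0 ≤ x then 1 else -1

lemma sgn_eq_one {x : ℝ} (h : 0 ≤ x) : sgn x = 1 := if_pos h

lemma sgn_of_neg {x : ℝ} (h : x < 0) : sgn x = -1 := if_neg (not_le.2 h)

lemma neg_one_le_sgn (x : ℝ) : (-1 : ℝ) ≤ sgn x := by
  unfold sgn; split <;> norm_num

lemma sgn_congr {a b : ℝ} (h : sgn a = sgn b) : 0 ≤ a ↔ 0 ≤ b := by
  unfold sgn at h
  split_ifs at h with h1 h2 h2 <;> first | tauto | norm_num at h

/-- the threshold network `x ↦ sgn((n-1) + Σ_{i=1}^n sgn(x_i))`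
on `ℝ^d` (with `n > 1`, `d ≥ n`) cannot be computed by any two-layer rectifier
network with fewer than `n` hidden units. -/
theorem threshold_not_computable_by_fewer_relus
    (n d : ℕ) (hn : 1 < n) (hd : n ≤ d)
    (G : (Fin d → ℝ) → ℝ)
    (hG : ∀ x, G x = sgn (((n : ℝ) - 1) + ∑ i : Fin n, sgn (x (Fin.castLE hd i)))) :
    ¬ ∃ m < n, ∃ (u : Fin m → Fin d → ℝ) (b : Fin m → ℝ)
      (w : Fin m → ℝ) (w0 : ℝ),
      ∀ x : Fin d → ℝ,
        G x = sgn (w0 + ∑ k, w k * max 0 ((∑ i, u k i * x i) + b k)) := by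
  rintro ⟨m, hm, u, b, w, w0, hf⟩
  -- The network is nonnegative exactly where some of the first n coordinates is ≥ 0.
  have key : ∀ x : Fin d → ℝ,
      (0 ≤ w0 + ∑ k, w k * max 0 ((∑ i, u k i * x i) + b k) ↔
        ∃ i : Fin n, 0 ≤ x (Fin.castLE hd i)) := by
    intro x
    have h1 : sgn (((n : ℝ) - 1) + ∑ i : Fin n, sgn (x (Fin.castLE hd i)))
        = sgn (w0 + ∑ k, w k * max 0 ((∑ i, u k i * x i) + b k)) := by
      rw [← hG x, hf x]
    rw [← sgn_congr h1]
    constructor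
    · intro h
      by_contra hc
      push_neg at hc
      have hs : ∀ i : Fin n, sgn (x (Fin.castLE hd i)) = -1 := fun i => sgn_of_neg (hc i)
      rw [Finset.sum_congr rfl fun i _ => hs i, Finset.sum_const, Finset.card_univ,
        Fintype.card_fin, nsmul_eq_mul] at h
      have h1n : (1 : ℝ) ≤ (n : ℝ) := by exact_mod_cast hn.le
      linarith
    · rintro ⟨i0, hi0⟩
      have h3 : sgn (x (Fin.castLE hd i0)) = 1 := sgn_eq_one hi0
      have h4 : (-1 : ℝ) * ((n : ℝ) - 1) ≤
          ∑ i ∈ Finset.univ.erase i0, sgn (x (Fin.castLE hd i)) := by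
        have hb := Finset.sum_le_sum (s := Finset.univ.erase i0)
          (f := fun _ : Fin n => (-1 : ℝ))
          (g := fun i : Fin n => sgn (x (Fin.castLE hd i)))
          (fun i _ => neg_one_le_sgn _)
        rw [Finset.sum_const, nsmul_eq_mul, Finset.card_erase_of_mem (Finset.mem_univ _),
          Finset.card_univ, Fintype.card_fin] at hb
        have hc : ((n - 1 : ℕ) : ℝ) = (n : ℝ) - 1 := by
          rw [Nat.cast_sub hn.le, Nat.cast_one]
        rw [hc] at hb
        linarith
      have h6 : sgn (x (Fin.castLE hd i0)) +
          ∑ i ∈ Finset.univ.erase i0, sgn (x (Fin.castLE hd i))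
          = ∑ i : Fin n, sgn (x (Fin.castLE hd i)) :=
        Finset.add_sum_erase Finset.univ
          (fun i : Fin n => sgn (x (Fin.castLE hd i))) (Finset.mem_univ i0)
      linarith
  -- Find a nonzero direction v supported on the first n coordinates, killed by all u k.
  have hlin : ∃ v : Fin n → ℝ, v ≠ 0 ∧
      ∀ k : Fin m, ∑ i : Fin n, u k (Fin.castLE hd i) * v i = 0 := by
    by_contra hcon
    push_neg at hcon
    let T : (Fin n → ℝ) →ₗ[ℝ] (Fin m → ℝ) :=
      { toFun := fun v k => ∑ i : Fin n, u k (Fin.castLE hd i) * v i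
        map_add' := by
          intro a c
          funext k
          simp [mul_add, Finset.sum_add_distrib]
        map_smul' := by
          intro r a
          funext k
          simp only [Pi.smul_apply, smul_eq_mul, RingHom.id_apply, Finset.mul_sum]
          exact Finset.sum_congr rfl fun i _ => by ring }
    have hker : ∀ vv : Fin n → ℝ, T vv = 0 → vv = 0 := by
      intro vv hvv
      by_contra hne
      obtain ⟨k, hk⟩ := hcon vv hne
      exact hk (congrFun hvv k)
    have hinj : Function.Injective T :=
      LinearMap.ker_eq_bot.mp (LinearMap.ker_eq_bot'.mpr hker)
    have hle := LinearMap.finrank_le_finrank_of_injective hinj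
    rw [Module.finrank_pi, Module.finrank_pi, Fintype.card_fin, Fintype.card_fin] at hle
    omega
  obtain ⟨v, hv, hvk⟩ := hlin
  -- Extend v by zero to ℝ^d.
  set V : Fin d → ℝ := fun l => if h : (l : ℕ) < n then v ⟨l, h⟩ else 0 with hV
  have hVcast : ∀ i : Fin n, V (Fin.castLE hd i) = v i := by
    intro i
    have hi : ((Fin.castLE hd i : Fin d) : ℕ) < n := by
      simp [Fin.coe_castLE]
    rw [hV]
    simp only [dif_pos hi]
    congr 1
  -- All the functionals u k kill V.
  have hsum : ∀ k : Fin m, ∑ l : Fin d, u k l * V l = 0 := by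
    intro k
    have himg : ∑ l ∈ Finset.image (Fin.castLE hd) Finset.univ, u k l * V l
        = ∑ l : Fin d, u k l * V l := by
      apply Finset.sum_subset (Finset.subset_univ _)
      intro l _ hl
      have hln : ¬ ((l : ℕ) < n) := by
        intro hlt
        apply hl
        refine Finset.mem_image.mpr ⟨⟨l, hlt⟩, Finset.mem_univ _, ?_⟩
        ext
        simp
      have : V l = 0 := by rw [hV]; simp [dif_neg hln]
      rw [this, mul_zero]
    rw [← himg, Finset.sum_image (fun a _ c _ h => Fin.castLE_injective hd h)]
    calc ∑ i : Fin n, u k (Fin.castLE hd i) * V (Fin.castLE hd i)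
        = ∑ i : Fin n, u k (Fin.castLE hd i) * v i :=
          Finset.sum_congr rfl fun i _ => by rw [hVcast i]
      _ = 0 := hvk k
  -- Pick a coordinate where v is nonzero and build two points contradicting `key`.
  obtain ⟨i0, hi0'⟩ := Function.ne_iff.mp hv
  have hi0 : v i0 ≠ 0 := by simpa using hi0'
  set p : Fin d → ℝ := fun l => if (l : ℕ) < n then (-1 : ℝ) else 0 with hp
  set T0 : ℝ := 2 / v i0 with hT0
  set q : Fin d → ℝ := fun l => p l + T0 * V l with hq
  have hpq : ∀ k : Fin m, ∑ l : Fin d, u k l * q l = ∑ l : Fin d, u k l * p l := by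
    intro k
    have : ∑ l : Fin d, u k l * q l
        = (∑ l : Fin d, u k l * p l) + T0 * ∑ l : Fin d, u k l * V l := by
      rw [Finset.mul_sum, ← Finset.sum_add_distrib]
      exact Finset.sum_congr rfl fun l _ => by rw [hq]; ring
    rw [this, hsum k, mul_zero, add_zero]
  have hFpq : w0 + ∑ k, w k * max 0 ((∑ i, u k i * q i) + b k)
      = w0 + ∑ k, w k * max 0 ((∑ i, u k i * p i) + b k) := by
    congr 1
    exact Finset.sum_congr rfl fun k _ => by rw [hpq k]
  have hpneg : ¬ (0 ≤ w0 + ∑ k, w k * max 0 ((∑ i, u k i * p i) + b k)) := by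
    rw [key p]
    rintro ⟨i, hi⟩
    have : p (Fin.castLE hd i) = -1 := by
      rw [hp]
      simp [Fin.coe_castLE, i.isLt]
    rw [this] at hi
    linarith
  have hqpos : 0 ≤ w0 + ∑ k, w k * max 0 ((∑ i, u k i * q i) + b k) := by
    rw [key q]
    refine ⟨i0, ?_⟩
    have h1 : p (Fin.castLE hd i0) = -1 := by
      rw [hp]; simp [Fin.coe_castLE, i0.isLt]
    have h2 : V (Fin.castLE hd i0) = v i0 := hVcast i0
    have : q (Fin.castLE hd i0) = -1 + T0 * v i0 := by
      simp only [hq]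
      rw [h1, h2]
    rw [this, hT0, div_mul_cancel₀ _ hi0]
    norm_num
  rw [hFpq] at hqpos
  exact hpneg hqpos
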